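/- arXiv:2008.02169 — 5 statements merged into one kernel-verified Lean document; each statement's English description precedes it below -/
import Mathlib

section
/- Let A be a commutative ring, let x_1,…,x_r ∈ A, let w_1,…,w_r be positive integers, and let m be a natural number. Then the ideal of A generated by the monomials x_1^{b_1}⋯x_r^{b_r} over all tuples of natural numbers (b_1,…,b_r) with ∑ w_i b_i ≥ m is equal to the ideal generated by the monomials x_1^{b_1}⋯x_r^{b_r} over all tuples with ∑ b_i ≤ m ≤ ∑ w_i b_i. -/
/-- Auxiliary: from any `b` with `m ≤ ∑ w i * b i` we can extract a pointwise smaller `b'`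
with `∑ b' i ≤ m ≤ ∑ w i * b' i`. -/
lemma exists_bounded_sub_tuple {r : ℕ} (w : Fin r → ℕ) (hw : ∀ i, 0 < w i) (m : ℕ) :
    ∀ n (b : Fin r → ℕ), ∑ i, b i = n → m ≤ ∑ i, w i * b i →
      ∃ b' : Fin r → ℕ, (∀ i, b' i ≤ b i) ∧ (∑ i, b' i) ≤ m ∧ m ≤ ∑ i, w i * b' i := by
  intro n
  induction n using Nat.strong_induction_on with
  | _ n ih =>
    intro b hn hm
    by_cases hbm : (∑ i, b i) ≤ m
    · exact ⟨b, fun i => le_rfl, hbm, hm⟩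
    · push_neg at hbm
      have hpos : ∃ i, 0 < b i := by
        by_contra h
        push_neg at h
        have : (∑ i, b i) = 0 := Finset.sum_eq_zero fun i _ => Nat.le_zero.mp (h i)
        omega
      obtain ⟨i, hi⟩ := hpos
      have hsplit : ∑ j, w j * b j = w i * b i + ∑ j ∈ Finset.univ \ {i}, w j * b j := by
        rw [← Finset.erase_eq]
        exact (Finset.add_sum_erase _ _ (Finset.mem_univ i)).symm
      have hsplit' : ∑ j, b j = b i + ∑ j ∈ Finset.univ \ {i}, b j := by
        rw [← Finset.erase_eq]
        exact (Finset.add_sum_erase _ _ (Finset.mem_univ i)).symm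
      have hle : ∑ j ∈ Finset.univ \ {i}, b j ≤ ∑ j ∈ Finset.univ \ {i}, w j * b j :=
        Finset.sum_le_sum fun j _ => Nat.le_mul_of_pos_left _ (hw j)
      have hwi : 1 ≤ w i := hw i
      have hbi1 : 1 ≤ b i := hi
      have hwibi : w i + b i ≤ w i * b i + 1 := by
        obtain ⟨k, hk⟩ := Nat.exists_eq_add_of_le hwi
        obtain ⟨l, hl⟩ := Nat.exists_eq_add_of_le hbi1
        rw [hk, hl]
        have hkl : 0 ≤ k * l := Nat.zero_le _
        nlinarith
      have hkey : m + w i ≤ ∑ j, w j * b j := by omega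
      set b'' := Function.update b i (b i - 1) with hb''
      have hble : ∀ j, b'' j ≤ b j := by
        intro j
        rcases eq_or_ne j i with rfl | hj
        · simp [hb'']
        · simp [hb'', Function.update_of_ne hj]
      have hsum'' : ∑ j, b'' j = n - 1 := by
        rw [hb'', Finset.sum_update_of_mem (Finset.mem_univ i)]
        omega
      have hwsum'' : ∑ j, w j * b'' j = (∑ j, w j * b j) - w i := by
        have h1 : ∑ j, w j * b'' j
            = w i * (b i - 1) + ∑ j ∈ Finset.univ \ {i}, w j * b j := by
          have hfun : (fun j => w j * Function.update b i (b i - 1) j)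
              = Function.update (fun j => w j * b j) i (w i * (b i - 1)) := by
            funext j
            by_cases hj : j = i
            · subst hj; simp
            · simp [Function.update_of_ne hj]
          calc ∑ j, w j * b'' j
              = ∑ j, Function.update (fun j => w j * b j) i (w i * (b i - 1)) j := by
                rw [hb'', ← hfun]
            _ = w i * (b i - 1) + ∑ j ∈ Finset.univ \ {i}, w j * b j :=
                Finset.sum_update_of_mem (Finset.mem_univ i) (fun j => w j * b j)
                  (w i * (b i - 1))
        have h2 : w i * (b i - 1) = w i * b i - w i := by
          obtain ⟨k, hk⟩ := Nat.exists_eq_add_of_le hbi1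
          rw [hk, Nat.add_sub_cancel_left, Nat.mul_add, Nat.mul_one]
          omega
        rw [h1, h2, hsplit]
        omega
      have hm'' : m ≤ ∑ j, w j * b'' j := by omega
      obtain ⟨b', hb'le, hb'sum, hb'w⟩ := ih (n - 1) (by omega) b'' hsum'' hm''
      exact ⟨b', fun j => (hb'le j).trans (hble j), hb'sum, hb'w⟩

/-- in a commutative ring `A`, the ideal generated by the monomials
`x₁^{b₁} ⋯ x_r^{b_r}` over all tuples with `∑ wᵢ bᵢ ≥ m` coincides with the ideal generated
by the monomials over all tuples with `∑ bᵢ ≤ m ≤ ∑ wᵢ bᵢ`. -/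
theorem weighted_monomial_ideal_eq_bounded_monomial_ideal
    {A : Type*} [CommRing A] {r : ℕ} (x : Fin r → A) (w : Fin r → ℕ) (hw : ∀ i, 0 < w i)
    (m : ℕ) :
    Ideal.span {y : A | ∃ b : Fin r → ℕ, m ≤ ∑ i, w i * b i ∧ y = ∏ i, x i ^ b i} =
      Ideal.span {y : A | ∃ b : Fin r → ℕ,
        ((∑ i, b i) ≤ m ∧ m ≤ ∑ i, w i * b i) ∧ y = ∏ i, x i ^ b i} := by
  apply le_antisymm
  · rw [Ideal.span_le]
    rintro y ⟨b, hb, rfl⟩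
    obtain ⟨b', hle, hsum, hwsum⟩ := exists_bounded_sub_tuple w hw m (∑ i, b i) b rfl hb
    have hfactor : (∏ i, x i ^ b i) = (∏ i, x i ^ b' i) * ∏ i, x i ^ (b i - b' i) := by
      rw [← Finset.prod_mul_distrib]
      exact Finset.prod_congr rfl fun i _ => by
        rw [← pow_add]
        congr 1
        have := hle i
        omega
    rw [hfactor]
    exact Ideal.mul_mem_right _ _ (Ideal.subset_span ⟨b', ⟨hsum, hwsum⟩, rfl⟩)
  · exact Ideal.span_mono fun y ⟨b, ⟨_, h2⟩, hy⟩ => ⟨b, h2, hy⟩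
end

section
/- Let A be a commutative ring, let x_1,…,x_r ∈ A, and let w_1,…,w_r be positive integers. In the polynomial ring A[T], the A-subalgebra generated by the elements x_i·T^j for 1 ≤ i ≤ r and 1 ≤ j ≤ w_i is equal to the set of polynomials f ∈ A[T] such that for every m ≥ 0 the coefficient of T^m in f lies in the ideal I_m of A generated by the monomials x_1^{b_1}⋯x_r^{b_r} with ∑ w_i b_i ≥ m. -/
/-!
The coefficient condition defines a subalgebra of `A[T]` because `I_k * I_l ≤ I_(k+l)` and
`I_0 = A`, and every generator `xᵢ T^j` satisfies it, which gives one inclusion. Conversely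
`I_m` is spanned by monomials `∏ xᵢ^bᵢ` with `m ≤ ∑ wᵢ bᵢ`, and `∏ xᵢ^bᵢ T^m` is a product of
`bᵢ` factors `xᵢ T^j` with `0 ≤ j ≤ wᵢ` whose exponents add up to `m`.
-/

open Polynomial

namespace Polynomial

section Filtration

variable {A : Type*} [CommSemiring A]

def filtrationSubalgebra (I : ℕ → Ideal A) (h_zero : I 0 = ⊤)
    (h_mul : ∀ k l, I k * I l ≤ I (k + l)) : Subalgebra A A[X] where
  carrier := {f | ∀ m, f.coeff m ∈ I m}
  add_mem' hf hg m := by rw [coeff_add]; exact add_mem (hf m) (hg m)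
  mul_mem' {f g} hf hg m := by
    rw [coeff_mul]
    refine sum_mem fun kl hkl => ?_
    rw [← Finset.HasAntidiagonal.mem_antidiagonal.mp hkl]
    exact h_mul _ _ (Ideal.mul_mem_mul (hf kl.1) (hg kl.2))
  algebraMap_mem' a m := by
    rw [algebraMap_eq, coeff_C]
    split_ifs with hm
    · subst hm; simp [h_zero]
    · exact zero_mem _

theorem mem_filtrationSubalgebra {I : ℕ → Ideal A} {h_zero : I 0 = ⊤}
    {h_mul : ∀ k l, I k * I l ≤ I (k + l)} {f : A[X]} :
    f ∈ filtrationSubalgebra I h_zero h_mul ↔ ∀ m, f.coeff m ∈ I m :=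
  Iff.rfl

end Filtration

section MonomialBound

variable {A : Type*} [CommSemiring A] {S : Subalgebra A A[X]}

theorem monomial_mul_mem_of_le {a b : A} {N M : ℕ} (ha : ∀ n ≤ N, monomial n a ∈ S)
    (hb : ∀ n ≤ M, monomial n b ∈ S) {n : ℕ} (hn : n ≤ N + M) : monomial n (a * b) ∈ S := by
  have hsplit : monomial n (a * b) = monomial (min n N) a * monomial (n - min n N) b := by
    rw [monomial_mul_monomial, Nat.add_sub_cancel' (min_le_left n N)]
  rw [hsplit]
  exact mul_mem (ha _ (min_le_right n N)) (hb _ (by omega))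

theorem monomial_pow_mem_of_le {a : A} {N : ℕ} (ha : ∀ n ≤ N, monomial n a ∈ S) (k : ℕ) :
    ∀ n ≤ N * k, monomial n (a ^ k) ∈ S := by
  induction k with
  | zero =>
    intro n hn
    rw [Nat.le_zero.mp hn, pow_zero, monomial_zero_left, map_one]
    exact one_mem S
  | succ k ih =>
    intro n hn
    rw [pow_succ]
    exact monomial_mul_mem_of_le ih ha (by rwa [Nat.mul_succ] at hn)

theorem monomial_prod_mem_of_le {ι : Type*} (s : Finset ι) {a : ι → A} {N : ι → ℕ}
    (ha : ∀ i ∈ s, ∀ n ≤ N i, monomial n (a i) ∈ S) :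
    ∀ n ≤ ∑ i ∈ s, N i, monomial n (∏ i ∈ s, a i) ∈ S := by
  classical
  induction s using Finset.induction_on with
  | empty =>
    intro n hn
    rw [Finset.sum_empty, Nat.le_zero] at hn
    rw [hn, Finset.prod_empty, monomial_zero_left, map_one]
    exact one_mem S
  | insert i s hi ih =>
    intro n hn
    rw [Finset.sum_insert hi] at hn
    rw [Finset.prod_insert hi]
    exact monomial_mul_mem_of_le (ha i (Finset.mem_insert_self i s))
      (ih fun j hj => ha j (Finset.mem_insert_of_mem hj)) hn

end MonomialBound

end Polynomial

section WeightedIdeal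

variable {A : Type*} [CommRing A] {r : ℕ} (x : Fin r → A) (w : Fin r → ℕ)

def weightedIdeal (m : ℕ) : Ideal A :=
  Ideal.span {y : A | ∃ b : Fin r → ℕ, m ≤ ∑ i, w i * b i ∧ y = ∏ i, x i ^ b i}

theorem prod_pow_mem_weightedIdeal {m : ℕ} (b : Fin r → ℕ) (hb : m ≤ ∑ i, w i * b i) :
    ∏ i, x i ^ b i ∈ weightedIdeal x w m :=
  Ideal.subset_span ⟨b, hb, rfl⟩

theorem weightedIdeal_zero : weightedIdeal x w 0 = ⊤ :=
  (Ideal.eq_top_iff_one _).mpr <| by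
    simpa using prod_pow_mem_weightedIdeal x w (m := 0) 0 (Nat.zero_le _)

theorem weightedIdeal_mul_le (k l : ℕ) :
    weightedIdeal x w k * weightedIdeal x w l ≤ weightedIdeal x w (k + l) := by
  rw [weightedIdeal, weightedIdeal, Ideal.span_mul_span', Ideal.span_le]
  rintro _ ⟨_, ⟨b, hb, rfl⟩, _, ⟨c, hc, rfl⟩, rfl⟩
  have hweight : k + l ≤ ∑ i, w i * (b + c) i := by
    simp only [Pi.add_apply, mul_add, Finset.sum_add_distrib]
    omega
  rw [SetLike.mem_coe]
  simpa only [Pi.add_apply, pow_add, Finset.prod_mul_distrib] using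
    prod_pow_mem_weightedIdeal x w (b + c) hweight

theorem mem_weightedIdeal_of_le {i : Fin r} {m : ℕ} (hm : m ≤ w i) : x i ∈ weightedIdeal x w m := by
  classical
  simpa [Pi.single_apply] using
    prod_pow_mem_weightedIdeal x w (Pi.single i 1) (by simpa [Pi.single_apply] using hm)

theorem coeff_monomial_mem_weightedIdeal {i : Fin r} {j : ℕ} (hj : j ≤ w i) (m : ℕ) :
    (monomial j (x i)).coeff m ∈ weightedIdeal x w m := by
  rw [coeff_monomial]
  split_ifs with hjm
  · exact mem_weightedIdeal_of_le x w (hjm ▸ hj)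
  · exact zero_mem _

theorem weightedIdeal_le_comap_monomial {S : Subalgebra A A[X]}
    (hS : ∀ i, ∀ j ≤ w i, monomial j (x i) ∈ S) (m : ℕ) :
    weightedIdeal x w m ≤ (Subalgebra.toSubmodule S).comap (monomial m) := by
  refine Ideal.span_le.mpr ?_
  rintro _ ⟨b, hb, rfl⟩
  exact monomial_prod_mem_of_le _ (fun i _ => monomial_pow_mem_of_le (hS i) (b i)) m hb

end WeightedIdeal

theorem mem_adjoin_weighted_iff_coeff_mem_general
    {A : Type*} [CommRing A] {r : ℕ} (x : Fin r → A) (w : Fin r → ℕ)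
    (f : Polynomial A) :
    f ∈ Algebra.adjoin A {p : Polynomial A |
        ∃ (i : Fin r) (j : ℕ), 1 ≤ j ∧ j ≤ w i ∧
          p = Polynomial.C (x i) * Polynomial.X ^ j} ↔
      ∀ m : ℕ, f.coeff m ∈
        Ideal.span {y : A | ∃ b : Fin r → ℕ, m ≤ ∑ i, w i * b i ∧ y = ∏ i, x i ^ b i} := by
  set S := Algebra.adjoin A {p : Polynomial A |
    ∃ (i : Fin r) (j : ℕ), 1 ≤ j ∧ j ≤ w i ∧ p = Polynomial.C (x i) * Polynomial.X ^ j}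
  have hgen : ∀ i, ∀ j ≤ w i, monomial j (x i) ∈ S := by
    intro i j hj
    rcases Nat.eq_zero_or_pos j with rfl | hj₀
    · rw [monomial_zero_left, ← algebraMap_eq]
      exact S.algebraMap_mem (x i)
    · exact Algebra.subset_adjoin ⟨i, j, hj₀, hj, C_mul_X_pow_eq_monomial.symm⟩
  constructor
  · have hle : S ≤ filtrationSubalgebra (weightedIdeal x w) (weightedIdeal_zero x w)
        (weightedIdeal_mul_le x w) := Algebra.adjoin_le <| by
      rintro _ ⟨i, j, -, hj, rfl⟩
      rw [C_mul_X_pow_eq_monomial]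
      exact mem_filtrationSubalgebra.mpr (coeff_monomial_mem_weightedIdeal x w hj)
    exact fun hf => mem_filtrationSubalgebra.mp (hle hf)
  · intro hf
    rw [f.as_sum_support]
    exact sum_mem fun m _ => weightedIdeal_le_comap_monomial x w hgen m (hf m)

/-- in `A[T]`, the `A`-subalgebra generated by the elements `xᵢ·T^j` for
`1 ≤ j ≤ wᵢ` consists exactly of the polynomials all of whose coefficients satisfy: the
coefficient of `T^m` lies in the ideal `I_m` generated by the monomials `x₁^{b₁} ⋯ x_r^{b_r}`
with `∑ wᵢ bᵢ ≥ m`. -/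
theorem mem_adjoin_weighted_iff_coeff_mem
    {A : Type*} [CommRing A] {r : ℕ} (x : Fin r → A) (w : Fin r → ℕ) (hw : ∀ i, 0 < w i)
    (f : Polynomial A) :
    f ∈ Algebra.adjoin A {p : Polynomial A |
        ∃ (i : Fin r) (j : ℕ), 1 ≤ j ∧ j ≤ w i ∧
          p = Polynomial.C (x i) * Polynomial.X ^ j} ↔
      ∀ m : ℕ, f.coeff m ∈
        Ideal.span {y : A | ∃ b : Fin r → ℕ, m ≤ ∑ i, w i * b i ∧ y = ∏ i, x i ^ b i} :=
  mem_adjoin_weighted_iff_coeff_mem_general x w f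
end

section
/- Let R be a unique factorization domain, let x ∈ R be a prime element, and let w be a positive integer. Then x·T^w − 1 is a prime element of the polynomial ring R[T]. -/
/-!
By Eisenstein's criterion at the prime `x`, `T^w - x` is irreducible in `R[T]`. Up to sign it is
the reversal of `x T^w - 1`, and reversal preserves irreducibility for polynomials with nonzero
constant term, so `x T^w - 1` is irreducible; since `R[T]` is again a UFD, it is prime.
-/

namespace Polynomial

section Reverse

variable {R : Type*} [CommRing R] [NoZeroDivisors R] {f g : R[X]}

theorem isUnit_of_isUnit_reverse (h0 : g.coeff 0 ≠ 0) (hu : IsUnit g.reverse) : IsUnit g := by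
  have htrail : g.natTrailingDegree = 0 := natTrailingDegree_eq_zero_of_constantCoeff_ne_zero h0
  have hdeg : g.natDegree = 0 := by
    simpa [natDegree_eq_zero_of_isUnit hu, htrail] using
      g.natDegree_eq_reverse_natDegree_add_natTrailingDegree
  rw [eq_C_of_natDegree_eq_zero hdeg] at hu ⊢
  simpa using hu

theorem irreducible_of_irreducible_reverse (h0 : f.coeff 0 ≠ 0) (h : Irreducible f.reverse) :
    Irreducible f := by
  refine ⟨fun hf => h.not_isUnit ?_, fun g k hf => ?_⟩
  · have hC := eq_C_of_natDegree_eq_zero (natDegree_eq_zero_of_isUnit hf)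
    rwa [hC, reverse_C, ← hC]
  · have hgk : g.coeff 0 * k.coeff 0 ≠ 0 := by rwa [← mul_coeff_zero, ← hf]
    rw [hf, reverse_mul_of_domain] at h
    exact (h.isUnit_or_isUnit rfl).imp (isUnit_of_isUnit_reverse (left_ne_zero_of_mul hgk))
      (isUnit_of_isUnit_reverse (right_ne_zero_of_mul hgk))

end Reverse

variable {R : Type*} [CommRing R] {x : R} {w : ℕ}

theorem reverse_C_mul_X_pow_sub_one (hx : x ≠ 0) (hw : w ≠ 0) :
    (C x * X ^ w - 1 : R[X]).reverse = C x - X ^ w := by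
  have hdeg : (C x * X ^ w - 1 : R[X]).natDegree = w := by
    rw [natDegree_sub_eq_left_of_natDegree_lt, natDegree_C_mul_X_pow w x hx]
    rw [natDegree_C_mul_X_pow w x hx, natDegree_one]
    exact Nat.pos_of_ne_zero hw
  rw [reverse, hdeg, reflect_sub, reflect_C_mul_X_pow, reflect_one, revAt_le le_rfl,
    Nat.sub_self, pow_zero, mul_one]

theorem isEisensteinAt_X_pow_sub_C [IsDomain R] (hx : Prime x) (hw : w ≠ 0) :
    (X ^ w - C x : R[X]).IsEisensteinAt (Ideal.span {x}) := by
  refine (monic_X_pow_sub_C x hw).isEisensteinAt_of_mem_of_notMem ?_ (fun {n} hn => ?_) ?_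
  · exact hx.not_isUnit ∘ Ideal.span_singleton_eq_top.mp
  · rw [natDegree_X_pow_sub_C] at hn
    rw [coeff_sub, coeff_X_pow, if_neg hn.ne, coeff_C, zero_sub, Ideal.neg_mem_iff]
    split_ifs
    · exact Ideal.mem_span_singleton_self x
    · exact Ideal.zero_mem _
  · rw [coeff_sub, coeff_X_pow, if_neg (Ne.symm hw), coeff_C, if_pos rfl, zero_sub,
      Ideal.neg_mem_iff, Ideal.span_singleton_pow, Ideal.mem_span_singleton]
    intro hdvd
    have := (pow_dvd_pow_iff (m := 1) (n := 2) hx.ne_zero hx.not_isUnit).mp (by rwa [pow_one])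
    omega

theorem irreducible_X_pow_sub_C_of_prime [IsDomain R] (hx : Prime x) (hw : w ≠ 0) :
    Irreducible (X ^ w - C x : R[X]) :=
  (isEisensteinAt_X_pow_sub_C hx hw).irreducible
    ((Ideal.span_singleton_prime hx.ne_zero).mpr hx) (monic_X_pow_sub_C x hw).isPrimitive
    (by rw [natDegree_X_pow_sub_C]; exact Nat.pos_of_ne_zero hw)

end Polynomial

open Polynomial in
/-- if `R` is a UFD and `x ∈ R` is a prime element, then for every positive
integer `w` the polynomial `x·T^w − 1` is a prime element of `R[T]`. -/
theorem prime_C_mul_X_pow_sub_one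
    {R : Type*} [CommRing R] [IsDomain R] [UniqueFactorizationMonoid R]
    {x : R} (hx : Prime x) {w : ℕ} (hw : 0 < w) :
    Prime (Polynomial.C x * Polynomial.X ^ w - 1) := by
  have hirr : Irreducible (C x * X ^ w - 1 : R[X]) := by
    refine irreducible_of_irreducible_reverse (by simp [coeff_X_pow, hw.ne]) ?_
    rw [reverse_C_mul_X_pow_sub_one hx.ne_zero hw.ne', ← neg_sub]
    exact (Associated.refl _).neg_left.symm.irreducible
      (irreducible_X_pow_sub_C_of_prime hx hw.ne')
  exact UniqueFactorizationMonoid.irreducible_iff_prime.mp hirr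
end

section
/- Let B be a commutative ring, let x ∈ B, let w be a positive integer, and let R be a subring of the polynomial ring B[T] that is closed under taking homogeneous components (i.e., for every f ∈ R and every n ≥ 0, the monomial (coefficient of T^n in f)·T^n belongs to R) and that contains x·T^w − 1. Then for every polynomial F ∈ B[T], if (x·T^w − 1)·F ∈ R then F ∈ R; consequently R ∩ ((x·T^w − 1)·B[T]) = (x·T^w − 1)·R. -/
/-- let `R` be a subring of `B[T]` closed under taking homogeneous components
and containing `x·T^w − 1`.  Then every `F ∈ B[T]` with `(x·T^w − 1)·F ∈ R` lies in `R`;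
consequently `R ∩ ((x·T^w − 1)·B[T]) = (x·T^w − 1)·R`. -/
theorem mem_of_mul_mem_and_inter_eq
    {B : Type*} [CommRing B] (x : B) {w : ℕ} (hw : 0 < w)
    (R : Subring (Polynomial B))
    (hhomog : ∀ f ∈ R, ∀ n : ℕ, Polynomial.C (f.coeff n) * Polynomial.X ^ n ∈ R)
    (hxw : Polynomial.C x * Polynomial.X ^ w - 1 ∈ R) :
    (∀ F : Polynomial B, (Polynomial.C x * Polynomial.X ^ w - 1) * F ∈ R → F ∈ R) ∧
      (R : Set (Polynomial B)) ∩
          {p : Polynomial B | ∃ F : Polynomial B,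
            p = (Polynomial.C x * Polynomial.X ^ w - 1) * F} =
        {p : Polynomial B | ∃ g ∈ R,
          p = (Polynomial.C x * Polynomial.X ^ w - 1) * g} := by
  have key : ∀ F : Polynomial B, (Polynomial.C x * Polynomial.X ^ w - 1) * F ∈ R → F ∈ R := by
    intro F hF
    set G := (Polynomial.C x * Polynomial.X ^ w - 1) * F with hGdef
    have hGc : ∀ n, G.coeff n =
        (if w ≤ n then x * F.coeff (n - w) else 0) - F.coeff n := by
      intro n
      have : G = Polynomial.C x * (F * Polynomial.X ^ w) - F := by
        rw [hGdef]; ring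
      rw [this, Polynomial.coeff_sub, Polynomial.coeff_C_mul,
        Polynomial.coeff_mul_X_pow', mul_ite, mul_zero]
    have hcoeff : ∀ n, Polynomial.C (F.coeff n) * Polynomial.X ^ n ∈ R := by
      intro n
      induction n using Nat.strong_induction_on with
      | _ n ih =>
        have hGn := hhomog _ hF n
        by_cases h : w ≤ n
        · have hFn : F.coeff n = x * F.coeff (n - w) - G.coeff n := by
            rw [hGc n, if_pos h]; ring
          have hprev : Polynomial.C (F.coeff (n - w)) * Polynomial.X ^ (n - w) ∈ R :=
            ih (n - w) (by omega)
          have hmul : (Polynomial.C x * Polynomial.X ^ w - 1) *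
              (Polynomial.C (F.coeff (n - w)) * Polynomial.X ^ (n - w)) ∈ R :=
            R.mul_mem hxw hprev
          have hxterm : Polynomial.C (x * F.coeff (n - w)) * Polynomial.X ^ n ∈ R := by
            have heq : Polynomial.C (x * F.coeff (n - w)) * Polynomial.X ^ n =
                (Polynomial.C x * Polynomial.X ^ w - 1) *
                  (Polynomial.C (F.coeff (n - w)) * Polynomial.X ^ (n - w)) +
                Polynomial.C (F.coeff (n - w)) * Polynomial.X ^ (n - w) := by
              rw [Polynomial.C_mul]
              have : (Polynomial.X : Polynomial B) ^ n = Polynomial.X ^ w * Polynomial.X ^ (n - w) :=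
                by rw [← pow_add]; congr 1; omega
              rw [this]; ring
            rw [heq]
            exact R.add_mem hmul hprev
          have : Polynomial.C (F.coeff n) * Polynomial.X ^ n =
              Polynomial.C (x * F.coeff (n - w)) * Polynomial.X ^ n -
              Polynomial.C (G.coeff n) * Polynomial.X ^ n := by
            rw [hFn, map_sub]; ring
          rw [this]
          exact R.sub_mem hxterm hGn
        · have hFn : F.coeff n = - G.coeff n := by
            rw [hGc n, if_neg h]; ring
          have : Polynomial.C (F.coeff n) * Polynomial.X ^ n =
              - (Polynomial.C (G.coeff n) * Polynomial.X ^ n) := by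
            rw [hFn, map_neg]; ring
          rw [this]
          exact R.neg_mem hGn
    have : F = ∑ i ∈ F.support, Polynomial.C (F.coeff i) * Polynomial.X ^ i := by
      conv_lhs => rw [Polynomial.as_sum_support F]
      exact Finset.sum_congr rfl fun i _ => (Polynomial.C_mul_X_pow_eq_monomial).symm
    rw [this]
    exact R.sum_mem fun i _ => hcoeff i
  refine ⟨key, ?_⟩
  ext p
  constructor
  · rintro ⟨hpR, F, rfl⟩
    exact ⟨F, key F hpR, rfl⟩
  · rintro ⟨g, hg, rfl⟩
    exact ⟨R.mul_mem hxw hg, g, rfl⟩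
end

section
/- Let k be a field, let n ≥ r ≥ 1, and let w_1,…,w_r be positive integers. Let P = k[x_1,…,x_n] be the polynomial ring and let S be the k-subalgebra of P[T] generated by x_1,…,x_n together with the elements x_i·T^j for 1 ≤ i ≤ r and 1 ≤ j ≤ w_i. Then the quotient S/(x_1·T^{w_1} − 1)·S is a polynomial ring in n variables over k; more precisely, the images of the n elements u := x_1·T^{w_1−1}, x_2·T^{w_2}, …, x_r·T^{w_r}, x_{r+1}, …, x_n generate S/(x_1·T^{w_1} − 1)·S as a k-algebra and are algebraically independent over k. -/
/-! Modulo `x₁T^{w₁} − 1` the element `c = x₁T^{w₁}` becomes `1`. A generator `x_ℓT^j`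
(`j ≤ w_ℓ`, where `w_ℓ = 0` for `ℓ > r`) of `S` times `c^{w_ℓ−j}` equals `x_ℓT^{w_ℓ}·u^{w_ℓ−j}`,
and `x_ℓT^{w_ℓ}` is a chart generator for `ℓ ≠ 1` and `c` itself for `ℓ = 1`; so the chart
generators generate the quotient.
For independence, `T ↦ x₁⁻¹`, `x_ℓ ↦ x_ℓ·x₁^{e_ℓ}` (`e_ℓ` the `T`-exponent of the `ℓ`-th chart
generator) maps `P[T]` to `P[x₁⁻¹]`, kills `x₁T^{w₁} − 1` and sends the chart generators to the
variables, which stay algebraically independent in `P[x₁⁻¹]`. -/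

open Polynomial MvPolynomial

/-- The `k`-subalgebra `S` of `P[T]` (for `P = k[x₁,…,x_n]`) generated by `x₁, …, x_n`
together with the elements `xᵢ·T^j` for `1 ≤ i ≤ r` and `1 ≤ j ≤ wᵢ`. -/
noncomputable def reesSubalgebra (k : Type*) [Field k] (n r : ℕ) (hrn : r ≤ n)
    (w : Fin r → ℕ) : Subalgebra k (Polynomial (MvPolynomial (Fin n) k)) :=
  Algebra.adjoin k
    ({p | ∃ ℓ : Fin n, p = Polynomial.C (MvPolynomial.X ℓ)} ∪
      {p | ∃ (i : Fin r) (j : ℕ), 1 ≤ j ∧ j ≤ w i ∧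
        p = Polynomial.C (MvPolynomial.X (Fin.castLE hrn i)) * Polynomial.X ^ j})

/-- The `n` elements `u := x₁·T^{w₁−1}, x₂·T^{w₂}, …, x_r·T^{w_r}, x_{r+1}, …, x_n`
of `P[T]` whose images are claimed to be polynomial generators of the `x₁`-chart. -/
noncomputable def chartGens (k : Type*) [Field k] (n r : ℕ) (hr : 0 < r)
    (w : Fin r → ℕ) : Fin n → Polynomial (MvPolynomial (Fin n) k) := fun ℓ =>
  if (ℓ : ℕ) = 0 then
    Polynomial.C (MvPolynomial.X ℓ) * Polynomial.X ^ (w ⟨0, hr⟩ - 1)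
  else if hℓ : (ℓ : ℕ) < r then
    Polynomial.C (MvPolynomial.X ℓ) * Polynomial.X ^ (w ⟨(ℓ : ℕ), hℓ⟩)
  else Polynomial.C (MvPolynomial.X ℓ)

theorem Polynomial.C_mul_X_pow_mul_C_mul_X_pow_pow_sub {R : Type*} [CommSemiring R]
    (a b : R) {q j e : ℕ} (hq : 0 < q) (hj : j ≤ e) :
    C a * X ^ j * (C b * X ^ q) ^ (e - j) = C a * X ^ e * (C b * X ^ (q - 1)) ^ (e - j) := by
  obtain ⟨q, rfl⟩ := Nat.exists_eq_add_of_lt hq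
  obtain ⟨d, rfl⟩ := Nat.exists_eq_add_of_le hj
  simp only [Nat.add_sub_cancel_left, zero_add, Nat.add_sub_cancel]
  ring

section QuotientGenerators

variable {k R ι : Type*} [CommRing k] [CommRing R] [Algebra k R]

theorem Ideal.Quotient.adjoin_range_mk_eq_top_of_mul_pow_mem {G : Set R}
    (hG : Algebra.adjoin k G = ⊤) (I : Ideal R) {c : R} (hc : c - 1 ∈ I) (V : ι → R)
    (hV : ∀ g ∈ G, ∃ m : ℕ, g * c ^ m ∈ Algebra.adjoin k (insert c (Set.range V))) :
    Algebra.adjoin k (Set.range fun i => Ideal.Quotient.mk I (V i)) = ⊤ := by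
  have hc1 : Ideal.Quotient.mk I c = 1 := by
    rw [← sub_eq_zero, ← map_one (Ideal.Quotient.mk I), ← map_sub,
      Ideal.Quotient.eq_zero_iff_mem]
    exact hc
  have hmap : (Algebra.adjoin k (insert c (Set.range V))).map (Ideal.Quotient.mkₐ k I) =
      Algebra.adjoin k (Set.range fun i => Ideal.Quotient.mk I (V i)) := by
    rw [AlgHom.map_adjoin, Set.image_insert_eq, Ideal.Quotient.mkₐ_eq_mk, hc1,
      Algebra.adjoin_insert_one, ← Set.range_comp]
    rfl
  refine top_unique ?_
  calc ⊤ = (Algebra.adjoin k G).map (Ideal.Quotient.mkₐ k I) := by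
        rw [hG, Algebra.map_top, (AlgHom.range_eq_top _).2 (Ideal.Quotient.mkₐ_surjective k I)]
    _ ≤ _ := by
        rw [AlgHom.map_adjoin, Algebra.adjoin_le_iff, ← hmap]
        rintro _ ⟨g, hg, rfl⟩
        obtain ⟨m, hm⟩ := hV g hg
        exact ⟨g * c ^ m, hm, by simp [hc1]⟩

theorem AlgebraicIndependent.quotient_mk_of_comp {L : Type*} [CommRing L] [Algebra k L]
    {I : Ideal R} {V : ι → R} (f : R →ₐ[k] L) (hf : ∀ a ∈ I, f a = 0)
    (hV : AlgebraicIndependent k fun i => f (V i)) :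
    AlgebraicIndependent k fun i => Ideal.Quotient.mk I (V i) :=
  AlgebraicIndependent.of_comp (Ideal.Quotient.liftₐ I f hf) hV

end QuotientGenerators

theorem MvPolynomial.algebraicIndependent_algebraMap_X_away {σ R : Type*} [CommRing R]
    [IsDomain R] {p : MvPolynomial σ R} (hp : p ≠ 0) :
    AlgebraicIndependent R fun i => algebraMap (MvPolynomial σ R) (Localization.Away p) (X i) :=
  (algebraicIndependent_X σ R).map' (f := IsScalarTower.toAlgHom R _ _)
    (IsLocalization.injective _ (powers_le_nonZeroDivisors_of_noZeroDivisors hp))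

section WeightedRees

variable {k : Type*} [Field k] {n r : ℕ}

def extWeight (w : Fin r → ℕ) (ℓ : Fin n) : ℕ :=
  if hℓ : (ℓ : ℕ) < r then w ⟨ℓ, hℓ⟩ else 0

def chartExp (hr : 0 < r) (w : Fin r → ℕ) (ℓ : Fin n) : ℕ :=
  if (ℓ : ℕ) = 0 then w ⟨0, hr⟩ - 1 else extWeight w ℓ

variable (k) in
def reesMonomials (w : Fin r → ℕ) : Set (Polynomial (MvPolynomial (Fin n) k)) :=
  {p | ∃ ℓ j, j ≤ extWeight w ℓ ∧ p = Polynomial.C (MvPolynomial.X ℓ) * Polynomial.X ^ j}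

theorem chartGens_eq (hr : 0 < r) (w : Fin r → ℕ) (ℓ : Fin n) :
    chartGens k n r hr w ℓ =
      Polynomial.C (MvPolynomial.X ℓ) * Polynomial.X ^ chartExp hr w ℓ := by
  unfold chartGens chartExp extWeight
  split_ifs <;> simp

theorem chartExp_castLE_zero (hr : 0 < r) (hrn : r ≤ n) (w : Fin r → ℕ) :
    chartExp hr w (Fin.castLE hrn ⟨0, hr⟩) = w ⟨0, hr⟩ - 1 :=
  if_pos rfl

theorem adjoin_coe_preimage_reesMonomials (hrn : r ≤ n) (w : Fin r → ℕ) :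
    Algebra.adjoin k
      (((↑) : reesSubalgebra k n r hrn w → Polynomial (MvPolynomial (Fin n) k)) ⁻¹'
        reesMonomials k w) = ⊤ := by
  refine top_unique (Algebra.adjoin_adjoin_coe_preimage.symm.trans_le
    (Algebra.adjoin_mono (Set.preimage_mono ?_)))
  rintro p (⟨ℓ, rfl⟩ | ⟨i, j, -, hj, rfl⟩)
  · exact ⟨ℓ, 0, Nat.zero_le _, by simp⟩
  · exact ⟨Fin.castLE hrn i, j, by simpa [extWeight] using hj, rfl⟩

theorem exists_mul_pow_mem_adjoin_chartGens (hr : 0 < r) (hrn : r ≤ n) (w : Fin r → ℕ)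
    (hw0 : 0 < w ⟨0, hr⟩) (hmem : ∀ ℓ, chartGens k n r hr w ℓ ∈ reesSubalgebra k n r hrn w)
    (hc : Polynomial.C (MvPolynomial.X (Fin.castLE hrn ⟨0, hr⟩)) * Polynomial.X ^ w ⟨0, hr⟩ ∈
      reesSubalgebra k n r hrn w)
    {g : reesSubalgebra k n r hrn w}
    (hg : (g : Polynomial (MvPolynomial (Fin n) k)) ∈ reesMonomials k w) :
    ∃ m : ℕ, g * ⟨_, hc⟩ ^ m ∈ Algebra.adjoin k
      (insert ⟨_, hc⟩ (Set.range fun ℓ => ⟨chartGens k n r hr w ℓ, hmem ℓ⟩)) := by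
  set c : reesSubalgebra k n r hrn w := ⟨_, hc⟩
  set V : Fin n → reesSubalgebra k n r hrn w := fun ℓ => ⟨chartGens k n r hr w ℓ, hmem ℓ⟩
  obtain ⟨ℓ, j, hj, hgℓ⟩ := hg
  obtain ⟨h, hh, hhval⟩ : ∃ h ∈ insert c (Set.range V),
      (h : Polynomial (MvPolynomial (Fin n) k)) =
        Polynomial.C (MvPolynomial.X ℓ) * Polynomial.X ^ extWeight w ℓ := by
    by_cases h0 : (ℓ : ℕ) = 0
    · obtain rfl : ℓ = Fin.castLE hrn ⟨0, hr⟩ := Fin.ext h0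
      exact ⟨c, Set.mem_insert _ _, by simp [c, extWeight, hr.ne']⟩
    · exact ⟨V ℓ, Set.mem_insert_of_mem _ ⟨ℓ, rfl⟩, by
        show chartGens k n r hr w ℓ = _
        rw [chartGens_eq, chartExp, if_neg h0]⟩
  have hV0 : (V (Fin.castLE hrn ⟨0, hr⟩) : Polynomial (MvPolynomial (Fin n) k)) =
      Polynomial.C (MvPolynomial.X (Fin.castLE hrn ⟨0, hr⟩)) *
        Polynomial.X ^ (w ⟨0, hr⟩ - 1) := by
    rw [← chartExp_castLE_zero hr hrn w]
    exact chartGens_eq hr w (Fin.castLE hrn ⟨0, hr⟩)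
  have hgc :
      g * c ^ (extWeight w ℓ - j) = h * V (Fin.castLE hrn ⟨0, hr⟩) ^ (extWeight w ℓ - j) :=
    Subtype.ext <| by
      simp only [Subalgebra.coe_mul, Subalgebra.coe_pow, hgℓ, hhval, hV0]
      exact C_mul_X_pow_mul_C_mul_X_pow_pow_sub _ _ hw0 hj
  refine ⟨extWeight w ℓ - j, hgc ▸ mul_mem (Algebra.subset_adjoin hh) (pow_mem ?_ _)⟩
  exact Algebra.subset_adjoin (Set.mem_insert_of_mem _ ⟨_, rfl⟩)

variable (k) in
noncomputable def chartEval (hr : 0 < r) (hrn : r ≤ n) (w : Fin r → ℕ) :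
    Polynomial (MvPolynomial (Fin n) k) →ₐ[k]
      Localization.Away (MvPolynomial.X (Fin.castLE hrn ⟨0, hr⟩) : MvPolynomial (Fin n) k) :=
  aevalTower (aeval fun ℓ => algebraMap (MvPolynomial (Fin n) k) _
      (MvPolynomial.X ℓ * MvPolynomial.X (Fin.castLE hrn ⟨0, hr⟩) ^ chartExp hr w ℓ))
    (IsLocalization.Away.invSelf
      (MvPolynomial.X (Fin.castLE hrn ⟨0, hr⟩) : MvPolynomial (Fin n) k))

theorem chartEval_chartGens (hr : 0 < r) (hrn : r ≤ n) (w : Fin r → ℕ) (ℓ : Fin n) :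
    chartEval k hr hrn w (chartGens k n r hr w ℓ) =
      algebraMap (MvPolynomial (Fin n) k) _ (MvPolynomial.X ℓ) := by
  rw [chartGens_eq, chartEval, map_mul, map_pow, Polynomial.aevalTower_C,
    Polynomial.aevalTower_X, MvPolynomial.aeval_X, map_mul, map_pow, mul_assoc, ← mul_pow,
    IsLocalization.Away.mul_invSelf, one_pow, mul_one]

theorem chartEval_C_X_mul_X_pow_sub_one (hr : 0 < r) (hrn : r ≤ n) (w : Fin r → ℕ)
    (hw0 : 0 < w ⟨0, hr⟩) :
    chartEval k hr hrn w (Polynomial.C (MvPolynomial.X (Fin.castLE hrn ⟨0, hr⟩)) *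
      Polynomial.X ^ w ⟨0, hr⟩ - 1) = 0 := by
  have hgen : Polynomial.C (MvPolynomial.X (Fin.castLE hrn ⟨0, hr⟩) : MvPolynomial (Fin n) k) *
      Polynomial.X ^ w ⟨0, hr⟩ = chartGens k n r hr w (Fin.castLE hrn ⟨0, hr⟩) * Polynomial.X := by
    rw [chartGens_eq, chartExp_castLE_zero, mul_assoc, ← pow_succ, Nat.sub_add_cancel hw0]
  rw [hgen, map_sub, map_mul, chartEval_chartGens, chartEval, Polynomial.aevalTower_X, map_one,
    IsLocalization.Away.mul_invSelf, sub_self]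

end WeightedRees

/-- the quotient of `S` by the ideal generated by `x₁·T^{w₁} − 1` is a
polynomial ring in `n` variables over `k`: the images of the `n` elements
`u := x₁·T^{w₁−1}, x₂·T^{w₂}, …, x_r·T^{w_r}, x_{r+1}, …, x_n` generate it as a `k`-algebra
and are algebraically independent over `k`. -/
theorem chart_of_weighted_rees_is_polynomial_ring
    (k : Type*) [Field k] (n r : ℕ) (hr : 1 ≤ r) (hrn : r ≤ n)
    (w : Fin r → ℕ) (hw : ∀ i, 0 < w i)
    (hmem : ∀ ℓ : Fin n, chartGens k n r hr w ℓ ∈ reesSubalgebra k n r hrn w)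
    (hs : Polynomial.C (MvPolynomial.X (Fin.castLE hrn ⟨0, hr⟩)) *
        Polynomial.X ^ (w ⟨0, hr⟩) - 1 ∈ reesSubalgebra k n r hrn w) :
    Algebra.adjoin k
        (Set.range fun ℓ : Fin n =>
          Ideal.Quotient.mk
            (Ideal.span {(⟨_, hs⟩ : reesSubalgebra k n r hrn w)})
            ⟨chartGens k n r hr w ℓ, hmem ℓ⟩) = ⊤ ∧
      @AlgebraicIndependent _ k _
        (fun ℓ : Fin n =>
          Ideal.Quotient.mk
            (Ideal.span {(⟨_, hs⟩ : reesSubalgebra k n r hrn w)})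
            ⟨chartGens k n r hr w ℓ, hmem ℓ⟩) _
        (@Ideal.Quotient.commRing (reesSubalgebra k n r hrn w) _
          (Ideal.span {(⟨_, hs⟩ : reesSubalgebra k n r hrn w)})) (Ideal.Quotient.algebra k) := by
  have hc := add_mem hs (one_mem _)
  rw [sub_add_cancel] at hc
  have hcI : (⟨_, hc⟩ : reesSubalgebra k n r hrn w) - 1 ∈
      Ideal.span {(⟨_, hs⟩ : reesSubalgebra k n r hrn w)} :=
    Ideal.subset_span (Subtype.ext rfl)
  have hf : ∀ a ∈ Ideal.span {(⟨_, hs⟩ : reesSubalgebra k n r hrn w)},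
      (chartEval k hr hrn w).comp (reesSubalgebra k n r hrn w).val a = 0 := by
    intro a ha
    obtain ⟨b, rfl⟩ := Ideal.mem_span_singleton'.1 ha
    rw [map_mul]
    exact mul_eq_zero_of_right _ (chartEval_C_X_mul_X_pow_sub_one hr hrn w (hw _))
  have hindep := AlgebraicIndependent.quotient_mk_of_comp
    (V := fun ℓ => (⟨chartGens k n r hr w ℓ, hmem ℓ⟩ : reesSubalgebra k n r hrn w)) _ hf <| by
      convert MvPolynomial.algebraicIndependent_algebraMap_X_away (R := k)
        (MvPolynomial.X_ne_zero (Fin.castLE hrn ⟨0, hr⟩))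
      exact chartEval_chartGens hr hrn w _
  have hgen := Ideal.Quotient.adjoin_range_mk_eq_top_of_mul_pow_mem
    (adjoin_coe_preimage_reesMonomials hrn w) _ hcI
    (fun ℓ => (⟨chartGens k n r hr w ℓ, hmem ℓ⟩ : reesSubalgebra k n r hrn w))
    fun g hg => exists_mul_pow_mem_adjoin_chartGens hr hrn w (hw _) hmem hc hg
  exact ⟨hgen, hindep⟩
end
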